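/- arXiv:2001.06507 — 7 statements merged into one kernel-verified Lean document; each statement's English description precedes it below -/
import Mathlib

section
/- For every real number α > 0, the supremum over all Q > 0 of the quantity (exp(αQ/(1+αQ)) − 1)/Q equals α. -/
/-!
Write `x = αQ`. Since `x / (1 + x) = 1 - (1 + x)⁻¹ ≤ log (1 + x)`, the numerator
`exp (x / (1 + x)) - 1` is at most `x`, so every quotient is at most `α`. Conversely
`exp t - 1 ≥ t` bounds the quotient below by `α / (1 + αQ)`, which tends to `α` as `Q → 0⁺`.
-/

open Real Filter Topology

theorem Real.exp_div_one_add_le {x : ℝ} (hx : 0 < 1 + x) : exp (x / (1 + x)) ≤ 1 + x := by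
  rw [← le_log_iff_exp_le hx]
  calc x / (1 + x) = 1 - (1 + x)⁻¹ := by field_simp; ring
    _ ≤ log (1 + x) := one_sub_inv_le_log_of_pos hx

noncomputable def powerRatio (α Q : ℝ) : ℝ := (exp (α * Q / (1 + α * Q)) - 1) / Q

variable {α Q : ℝ}

theorem powerRatio_le (hα : 0 ≤ α) (hQ : 0 < Q) : powerRatio α Q ≤ α := by
  have hx : 0 < 1 + α * Q := by positivity
  rw [powerRatio, div_le_iff₀ hQ]
  linarith [exp_div_one_add_le hx]

theorem div_one_add_mul_le_powerRatio (hα : 0 ≤ α) (hQ : 0 < Q) :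
    α / (1 + α * Q) ≤ powerRatio α Q := by
  have hx : 0 < 1 + α * Q := by positivity
  calc α / (1 + α * Q) = α * Q / (1 + α * Q) / Q := by field_simp
    _ ≤ powerRatio α Q := by
      rw [powerRatio]
      gcongr
      linarith [add_one_le_exp (α * Q / (1 + α * Q))]

theorem tendsto_powerRatio_nhdsGT_zero (hα : 0 ≤ α) :
    Tendsto (powerRatio α) (𝓝[>] 0) (𝓝 α) := by
  have hlower : Tendsto (fun Q ↦ α / (1 + α * Q)) (𝓝[>] 0) (𝓝 α) := by
    have : ContinuousAt (fun Q ↦ α / (1 + α * Q)) 0 :=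
      continuousAt_const.div (by fun_prop) (by simp)
    simpa using this.tendsto.mono_left nhdsWithin_le_nhds
  refine tendsto_of_tendsto_of_tendsto_of_le_of_le' hlower tendsto_const_nhds ?_ ?_
  · filter_upwards [self_mem_nhdsWithin] with Q hQ using div_one_add_mul_le_powerRatio hα hQ
  · filter_upwards [self_mem_nhdsWithin] with Q hQ using powerRatio_le hα hQ

/-- For every real `α > 0`, the supremum over all `Q > 0` of
`(exp (α*Q/(1+α*Q)) - 1)/Q` equals `α`. -/
theorem stmt_0 (α : ℝ) (hα : 0 < α) :
    sSup {y : ℝ | ∃ Q : ℝ, 0 < Q ∧ y = (Real.exp (α * Q / (1 + α * Q)) - 1) / Q} = α := by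
  refine csSup_eq_of_forall_le_of_forall_lt_exists_gt ⟨_, 1, one_pos, rfl⟩ ?_ ?_
  · rintro _ ⟨Q, hQ, rfl⟩
    exact powerRatio_le hα.le hQ
  · intro w hw
    obtain ⟨Q, hwQ, hQ⟩ :=
      ((tendsto_powerRatio_nhdsGT_zero hα.le).eventually (lt_mem_nhds hw)).and
        self_mem_nhdsWithin |>.exists
    exact ⟨_, ⟨Q, hQ, rfl⟩, hwQ⟩
end

section
/- Let α ≥ 0, P_a ≥ 0, P_1 ≥ 0, and Q_1 > 0 be real numbers with P_a ≥ αQ_1 + αP_1Q_1². Then for every Q with 0 < Q ≤ Q_1, P_a·Q/(1+(P_a+P_1)Q) ≥ αQ²/(1+αQ²). -/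
/-- If `P_a ≥ α*Q_1 + α*P_1*Q_1²`, then for every `0 < Q ≤ Q_1`,
`P_a*Q/(1+(P_a+P_1)*Q) ≥ α*Q²/(1+α*Q²)`. -/
theorem stmt_6 (α Pa P1 Q1 : ℝ) (hα : 0 ≤ α) (hPa : 0 ≤ Pa) (hP1 : 0 ≤ P1) (hQ1 : 0 < Q1)
    (h : Pa ≥ α * Q1 + α * P1 * Q1 ^ 2) :
    ∀ Q : ℝ, 0 < Q → Q ≤ Q1 →
      Pa * Q / (1 + (Pa + P1) * Q) ≥ α * Q ^ 2 / (1 + α * Q ^ 2) := by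
  intro Q hQ hQQ1
  have hd1 : 0 < 1 + α * Q ^ 2 := by positivity
  have hd2 : 0 < 1 + (Pa + P1) * Q := by positivity
  rw [ge_iff_le, div_le_div_iff₀ hd1 hd2]
  have key : α * Q + α * P1 * Q ^ 2 ≤ Pa := by
    nlinarith [mul_le_mul_of_nonneg_left hQQ1 hα, mul_nonneg (mul_nonneg hα hP1) (mul_nonneg (sub_nonneg.2 hQQ1) (by linarith : (0:ℝ) ≤ Q1 + Q))]
  nlinarith [mul_le_mul_of_nonneg_left key hQ.le]
end

section
/- Let P_a > 0, P_1 > 0, Q_1 > 0 be real numbers, set P = P_a + P_1, and for each natural number n ≥ 1 define f_n(β) = βⁿ(1+PQ_1)(1+P_1Q_1) − βP_aQ_1 − (1+P_1Q_1). If (β_n) is a sequence of real numbers with β_n ∈ (0,1) and f_n(β_n) = 0 for every n ≥ 1, then β_n converges to 1 as n → ∞. -/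
open Filter Topology

/-- If `β_n ∈ (0,1)` is a root of
`f_n(β) = βⁿ(1+P*Q_1)(1+P_1*Q_1) − β*P_a*Q_1 − (1+P_1*Q_1)` for every `n ≥ 1`,
then `β_n → 1`. -/
theorem stmt_8 (Pa P1 Q1 : ℝ) (hPa : 0 < Pa) (hP1 : 0 < P1) (hQ1 : 0 < Q1)
    (P : ℝ) (hP : P = Pa + P1) (β : ℕ → ℝ)
    (hβ : ∀ n : ℕ, 1 ≤ n → β n ∈ Set.Ioo (0 : ℝ) 1 ∧
      (β n) ^ n * (1 + P * Q1) * (1 + P1 * Q1) - β n * Pa * Q1 - (1 + P1 * Q1) = 0) :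
    Tendsto β atTop (nhds 1) := by
  have hPQ : (0:ℝ) < 1 + P * Q1 := by nlinarith
  set c : ℝ := (1 + P * Q1)⁻¹ with hcdef
  have hc0 : 0 < c := inv_pos.mpr hPQ
  have hci : c * (1 + P * Q1) = 1 := inv_mul_cancel₀ (ne_of_gt hPQ)
  have hlow : ∀ n : ℕ, 1 ≤ n → c ^ ((1:ℝ)/n) ≤ β n := by
    intro n hn
    obtain ⟨⟨hb0, hb1⟩, heq⟩ := hβ n hn
    have h1 : 0 < 1 + P1 * Q1 := by nlinarith
    have hge : 1 ≤ (β n) ^ n * (1 + P * Q1) := by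
      nlinarith [mul_pos (mul_pos hb0 hPa) hQ1]
    have hpow : c ≤ (β n) ^ n := by nlinarith
    have hn0 : (n:ℝ) ≠ 0 := by positivity
    calc c ^ ((1:ℝ)/n) ≤ ((β n) ^ n) ^ ((1:ℝ)/n) :=
          Real.rpow_le_rpow (le_of_lt hc0) hpow (by positivity)
      _ = ((β n) ^ (n:ℝ)) ^ ((1:ℝ)/n) := by rw [Real.rpow_natCast]
      _ = β n := by
          rw [← Real.rpow_mul (le_of_lt hb0), mul_one_div_cancel hn0, Real.rpow_one]
  have hlim : Tendsto (fun n : ℕ => c ^ ((1:ℝ)/n)) atTop (nhds 1) := by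
    have h0 : Tendsto (fun n : ℕ => (1:ℝ)/n) atTop (nhds 0) :=
      tendsto_one_div_atTop_nhds_zero_nat
    have hcont : Tendsto (fun x : ℝ => c ^ x) (nhds 0) (nhds 1) := by
      have := (Real.continuousAt_const_rpow (ne_of_gt hc0) (b := 0)).tendsto
      simpa [Real.rpow_zero] using this
    exact hcont.comp h0
  refine tendsto_of_tendsto_of_tendsto_of_le_of_le' hlim tendsto_const_nhds ?_ ?_
  · filter_upwards [eventually_ge_atTop 1] with n hn using hlow n hn
  · filter_upwards [eventually_ge_atTop 1] with n hn using le_of_lt (hβ n hn).1.2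
end

section
/- Let P_a > 0, P_1 > 0, Q_1 > 0 be real numbers, set P = P_a + P_1 and a = 1/(1+P_1Q_1). Then for every natural number n ≥ 1, with β = a^(1/n), one has βⁿ(1+PQ_1)(1+P_1Q_1) − βP_aQ_1 − (1+P_1Q_1) ≥ 0. -/
/-- With `a = 1/(1+P_1*Q_1)` and `β = a^(1/n)`, one has
`βⁿ(1+P*Q_1)(1+P_1*Q_1) − β*P_a*Q_1 − (1+P_1*Q_1) ≥ 0` for every `n ≥ 1`. -/
theorem stmt_9 (Pa P1 Q1 : ℝ) (hPa : 0 < Pa) (hP1 : 0 < P1) (hQ1 : 0 < Q1)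
    (P a : ℝ) (hP : P = Pa + P1) (ha : a = 1 / (1 + P1 * Q1)) :
    ∀ n : ℕ, 1 ≤ n →
      (a ^ ((1 : ℝ) / n)) ^ n * (1 + P * Q1) * (1 + P1 * Q1)
        - a ^ ((1 : ℝ) / n) * Pa * Q1 - (1 + P1 * Q1) ≥ 0 := by
  intro n hn
  have hd : (0:ℝ) < 1 + P1 * Q1 := by positivity
  have ha0 : 0 ≤ a := by rw [ha]; positivity
  have ha1 : a ≤ 1 := by
    rw [ha, div_le_one hd]; nlinarith
  have hn0 : ((n:ℝ)) ≠ 0 := by positivity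
  have hpow : (a ^ ((1 : ℝ) / n)) ^ n = a := by
    rw [← Real.rpow_natCast (a ^ ((1:ℝ)/n)) n, ← Real.rpow_mul ha0,
      one_div, inv_mul_cancel₀ hn0, Real.rpow_one]
  have hb1 : a ^ ((1:ℝ)/n) ≤ 1 :=
    Real.rpow_le_one ha0 ha1 (by positivity)
  rw [hpow]
  have key : a * (1 + P * Q1) * (1 + P1 * Q1) = 1 + P * Q1 := by
    rw [ha]; field_simp
  rw [key]
  have hb0 : 0 ≤ a ^ ((1:ℝ)/n) := Real.rpow_nonneg ha0 _
  nlinarith [mul_pos hPa hQ1, hb1, hb0]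
end

section
/- Let P_1 > 0, Q_1 > 0, P_a ≥ 0, Q > 0 be real numbers, set a = 1/(1+P_1Q_1) and P = P_a + P_1. Then the function κ ↦ a^κ·(1 − κ·a^κ·P_aQ/(1+(a^κ·P_a+P_1)Q)) has derivative at κ = 0 equal to −(ln(1+P_1Q_1) + P_aQ/(1+PQ)). -/
/-! The distortion has the shape `g κ · (1 - κ · R κ)` with `g κ = a ^ κ`, so by the product rule
its derivative at `0` is `g' 0 - g 0 · R 0 = log a - R 0`. Only continuity of `R` at `0` is needed,
because the slope of `κ ↦ κ · R κ` at `0` is `R κ` itself. -/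

section
variable {𝕜 E : Type*} [NontriviallyNormedField 𝕜] [NormedAddCommGroup E] [NormedSpace 𝕜 E]

theorem hasDerivAt_sub_smul_of_continuousAt {f : 𝕜 → E} {x : 𝕜} (hf : ContinuousAt f x) :
    HasDerivAt (fun y => (y - x) • f y) (f x) x := by
  refine hasDerivAt_iff_tendsto_slope.2 ((hf.tendsto.mono_left nhdsWithin_le_nhds).congr' ?_)
  filter_upwards [self_mem_nhdsWithin] with y (hy : y ≠ x)
  exact (slope_sub_smul f hy.symm).symm

theorem hasDerivAt_mul_one_sub_sub_mul {g R : 𝕜 → 𝕜} {g' x : 𝕜} (hg : HasDerivAt g g' x)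
    (hR : ContinuousAt R x) :
    HasDerivAt (fun y => g y * (1 - (y - x) * R y)) (g' - g x * R x) x := by
  refine (hg.mul ((hasDerivAt_sub_smul_of_continuousAt hR).const_sub 1)).congr_deriv ?_
  simp only [smul_eq_mul, sub_self, zero_mul, sub_zero]
  ring

end

/-- With `a = 1/(1+P_1*Q_1)` and `P = P_a + P_1`, the function
`κ ↦ a^κ(1 − κ·a^κ·P_a·Q/(1+(a^κ·P_a+P_1)·Q))` has derivative at `κ = 0` equal to
`−(ln(1+P_1*Q_1) + P_a·Q/(1+P·Q))`. -/
theorem stmt_11 (Pa P1 Q1 Q : ℝ) (hP1 : 0 < P1) (hQ1 : 0 < Q1) (hPa : 0 ≤ Pa) (hQ : 0 < Q)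
    (a P : ℝ) (ha : a = 1 / (1 + P1 * Q1)) (hP : P = Pa + P1) :
    HasDerivAt
      (fun κ : ℝ =>
        a ^ κ * (1 - κ * a ^ κ * Pa * Q / (1 + (a ^ κ * Pa + P1) * Q)))
      (-(Real.log (1 + P1 * Q1) + Pa * Q / (1 + P * Q))) 0 := by
  have ha0 : 0 < a := by rw [ha]; positivity
  have hloga : Real.log a = -Real.log (1 + P1 * Q1) := by rw [ha, one_div, Real.log_inv]
  have hpow : HasDerivAt (fun κ : ℝ => a ^ κ) (a ^ (0 : ℝ) * Real.log a) 0 :=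
    (Real.hasStrictDerivAt_const_rpow ha0 0).hasDerivAt
  have hR : ContinuousAt (fun κ : ℝ => a ^ κ * Pa * Q / (1 + (a ^ κ * Pa + P1) * Q)) 0 := by
    have hrpow := Real.continuousAt_const_rpow (b := 0) ha0.ne'
    refine ((hrpow.mul_const Pa).mul_const Q).div
      (((hrpow.mul_const Pa).add_const P1).mul_const Q |>.const_add 1) ?_
    rw [Real.rpow_zero]
    positivity
  have hshape : (fun κ : ℝ => a ^ κ * (1 - κ * a ^ κ * Pa * Q / (1 + (a ^ κ * Pa + P1) * Q))) =
      fun κ => a ^ κ * (1 - (κ - 0) * (a ^ κ * Pa * Q / (1 + (a ^ κ * Pa + P1) * Q))) := by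
    ext κ
    ring
  rw [hshape]
  refine (hasDerivAt_mul_one_sub_sub_mul hpow hR).congr_deriv ?_
  simp only [Real.rpow_zero, hloga, hP, one_mul]
  ring
end

section
/- Let α > 0, P_1 > 0, Q_1 > 0, P_a ≥ 0 be real numbers with P_a ≥ (1/ln(1+P_1Q_1))·(1/Q_1 + P_1), and set P = P_a + P_1. Then for every Q ≥ Q_1, ln(1+P_1Q_1) + P_aQ/(1+PQ) ≥ αQ²/(1+αQ²). -/
/-- If `P_a ≥ (1/ln(1+P_1*Q_1))(1/Q_1 + P_1)` and `P = P_a + P_1`, then for every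
`Q ≥ Q_1`, `ln(1+P_1*Q_1) + P_a·Q/(1+P·Q) ≥ α·Q²/(1+α·Q²)`. -/
theorem stmt_14 (α P1 Q1 Pa : ℝ) (hα : 0 < α) (hP1 : 0 < P1) (hQ1 : 0 < Q1) (hPa : 0 ≤ Pa)
    (h : Pa ≥ (1 / Real.log (1 + P1 * Q1)) * (1 / Q1 + P1))
    (P : ℝ) (hP : P = Pa + P1) :
    ∀ Q : ℝ, Q1 ≤ Q →
      Real.log (1 + P1 * Q1) + Pa * Q / (1 + P * Q) ≥ α * Q ^ 2 / (1 + α * Q ^ 2) := by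
  intro Q hQ
  have hQ0 : 0 < Q := lt_of_lt_of_le hQ1 hQ
  set L := Real.log (1 + P1 * Q1) with hLdef
  have hL0 : 0 < L := Real.log_pos (by nlinarith)
  have hden : 0 < 1 + P * Q := by rw [hP]; nlinarith
  have hden2 : 0 < 1 + α * Q ^ 2 := by positivity
  have h1 : 1 / Q1 + P1 ≤ L * Pa := by
    have hLL : L * (1 / L) = 1 := mul_one_div_cancel hL0.ne'
    have hx : 0 < 1 / Q1 + P1 := by positivity
    nlinarith [mul_le_mul_of_nonneg_left h hL0.le, hLL, hx]
  have hinv : Q1 * (1 / Q1) = 1 := mul_one_div_cancel hQ1.ne'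
  have hinvpos : 0 < 1 / Q1 := by positivity
  have h3 : 1 + P1 * Q ≤ L * Pa * Q := by nlinarith
  have key : 1 - L ≤ Pa * Q / (1 + P * Q) := by
    rw [le_div_iff₀ hden, hP]
    nlinarith [mul_pos (mul_pos hL0 hP1) hQ0]
  have hrhs : α * Q ^ 2 / (1 + α * Q ^ 2) ≤ 1 := by
    rw [div_le_one hden2]; linarith
  linarith
end

section
/- Let α > 0, P_1 > 0, Q_1 > 0, P_a > 0 be real numbers with P_a ≥ max( (1/ln(1+P_1Q_1))·(1/Q_1 + P_1), αQ_1 + αQ_1²P_1 ), and set P = P_a + P_1. Define F : (0,∞) → ℝ by F(Q) = P_aQ/(1+PQ) for 0 < Q < Q_1 and F(Q) = ln(1+P_1Q_1) + P_aQ/(1+PQ) for Q ≥ Q_1. Then F(Q) ≥ αQ²/(1+αQ²) for every Q > 0. -/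
/-- If `P_a ≥ max((1/ln(1+P_1*Q_1))(1/Q_1+P_1), α*Q_1+α*Q_1²*P_1)` and
`F(Q) = P_a·Q/(1+P·Q)` for `0 < Q < Q_1`, `F(Q) = ln(1+P_1·Q_1) + P_a·Q/(1+P·Q)` for
`Q ≥ Q_1` (with `P = P_a + P_1`), then `F(Q) ≥ α·Q²/(1+α·Q²)` for all `Q > 0`. -/
theorem stmt_15 (α P1 Q1 Pa : ℝ) (hα : 0 < α) (hP1 : 0 < P1) (hQ1 : 0 < Q1) (hPa : 0 < Pa)
    (h : Pa ≥ max ((1 / Real.log (1 + P1 * Q1)) * (1 / Q1 + P1))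
      (α * Q1 + α * Q1 ^ 2 * P1))
    (P : ℝ) (hP : P = Pa + P1) (F : ℝ → ℝ)
    (hFlt : ∀ Q : ℝ, 0 < Q → Q < Q1 → F Q = Pa * Q / (1 + P * Q))
    (hFge : ∀ Q : ℝ, Q1 ≤ Q → F Q = Real.log (1 + P1 * Q1) + Pa * Q / (1 + P * Q)) :
    ∀ Q : ℝ, 0 < Q → F Q ≥ α * Q ^ 2 / (1 + α * Q ^ 2) := by
  subst hP
  intro Q hQ
  have hden1 : 0 < 1 + (Pa + P1) * Q := by positivity
  have hden2 : 0 < 1 + α * Q ^ 2 := by positivity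
  set L := Real.log (1 + P1 * Q1) with hLdef
  have hLpos : 0 < L := Real.log_pos (by nlinarith)
  have h1 : Pa ≥ (1 / L) * (1 / Q1 + P1) := le_trans (le_max_left _ _) h
  have h2 : Pa ≥ α * Q1 + α * Q1 ^ 2 * P1 := le_trans (le_max_right _ _) h
  have hkey : 1 / Q1 + P1 ≤ L * Pa := by
    rw [ge_iff_le, one_div, inv_mul_le_iff₀ hLpos] at h1
    linarith
  have hLPa : 1 + P1 * Q1 ≤ L * Pa * Q1 := by
    have h5 : 1 / Q1 ≤ L * Pa - P1 := by linarith
    have h6 : 1 ≤ (L * Pa - P1) * Q1 := by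
      rw [div_le_iff₀ hQ1] at h5; linarith
    nlinarith
  rcases lt_or_ge Q Q1 with hlt | hge
  · rw [hFlt Q hQ hlt, ge_iff_le, div_le_div_iff₀ hden2 hden1]
    have hd : (0:ℝ) ≤ (Q1 - Q) * (Q1 + Q) :=
      mul_nonneg (by linarith) (by linarith)
    have hQ2 : α * Q + α * Q ^ 2 * P1 ≤ α * Q1 + α * Q1 ^ 2 * P1 := by
      nlinarith [mul_pos hα hP1, sub_nonneg.mpr hlt.le]
    have h4 : α * Q + α * Q ^ 2 * P1 ≤ Pa := le_trans hQ2 h2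
    nlinarith [mul_le_mul_of_nonneg_left h4 hQ.le]
  · rw [hFge Q hge]
    have hub : α * Q ^ 2 / (1 + α * Q ^ 2) ≤ 1 := by
      rw [div_le_one hden2]; linarith
    have hden3 : 0 < 1 + (Pa + P1) * Q1 := by positivity
    have hmono : Pa * Q1 / (1 + (Pa + P1) * Q1) ≤ Pa * Q / (1 + (Pa + P1) * Q) := by
      rw [div_le_div_iff₀ hden3 hden1]; nlinarith
    have hone : 1 - L ≤ Pa * Q1 / (1 + (Pa + P1) * Q1) := by
      rw [le_div_iff₀ hden3]
      nlinarith [mul_pos (mul_pos hLpos hP1) hQ1]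
    linarith
end
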